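/- arXiv:2108.02256 — 4 statements merged into one kernel-verified Lean document; each statement's English description precedes it below -/
import Mathlib

section
/- Let H be a real Hilbert space, L a bounded nonnegative self-adjoint operator on H, P an orthogonal projection on H, and λ > 0. For g ∈ H with P g = 0, set u(t) := exp(−t(L + λP)) g (operator exponential of the bounded operator −(L + λP)). Then for every t ≥ 0 one has λ‖P u(t)‖² ≤ ⟨L g, g⟩. -/
open scoped RealInnerProductSpace

/-!
With `A = L + λ P`, the energy `⟪A u, u⟫` has derivative `-2 ‖A u‖² ≤ 0` along `u' = -A u`, so it
never exceeds its initial value `⟪A g, g⟫ = ⟪L g, g⟫` (as `P g = 0`). Since `L ≥ 0` and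
`⟪P v, v⟫ = ‖P v‖²` for an orthogonal projection, the energy dominates `λ ‖P u‖²`.
-/

open NormedSpace ContinuousLinearMap

theorem hasDerivAt_exp_neg_smul_apply {E : Type*} [NormedAddCommGroup E] [NormedSpace ℝ E]
    [CompleteSpace E] (A : E →L[ℝ] E) (x : E) (t : ℝ) :
    HasDerivAt (fun s : ℝ => exp ((-s) • A) x) (-A (exp ((-t) • A) x)) t := by
  have hexp := (hasDerivAt_exp_smul_const' A (-t)).scomp t (hasDerivAt_neg t)
  simpa using hexp.clm_apply (hasDerivAt_const t x)

section Energy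

variable {H : Type*} [NormedAddCommGroup H] [InnerProductSpace ℝ H] [CompleteSpace H]

theorem real_inner_apply_self_eq_norm_sq_of_comp_self {P : H →L[ℝ] H} (hP : IsSelfAdjoint P)
    (hPidem : P ∘L P = P) (x : H) : ⟪P x, x⟫ = ‖P x‖ ^ 2 := by
  calc ⟪P x, x⟫ = ⟪P (P x), x⟫ := by rw [← comp_apply, hPidem]
    _ = ⟪P x, P x⟫ := hP.isSymmetric _ _
    _ = ‖P x‖ ^ 2 := real_inner_self_eq_norm_sq _

theorem antitone_inner_apply_exp_neg_smul {A : H →L[ℝ] H} (hA : IsSelfAdjoint A) (x : H) :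
    Antitone fun t : ℝ => ⟪A (exp ((-t) • A) x), exp ((-t) • A) x⟫ := by
  refine antitone_of_hasDerivAt_nonpos (f' := fun t => -(2 * ‖A (exp ((-t) • A) x)‖ ^ 2))
    (fun t => ?_) fun t => neg_nonpos.mpr (by positivity)
  have hu := hasDerivAt_exp_neg_smul_apply A x t
  have hAu := A.hasFDerivAt.comp_hasDerivAt t hu
  refine (hAu.inner ℝ hu).congr_deriv ?_
  simp only [Function.comp_apply, inner_neg_left, inner_neg_right, map_neg]
  have hsym : ∀ y z : H, ⟪A y, z⟫ = ⟪y, A z⟫ := hA.isSymmetric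
  rw [hsym (A _), real_inner_self_eq_norm_sq]
  ring

end Energy

theorem base_energy_estimate_sup_general
    {H : Type*} [NormedAddCommGroup H] [InnerProductSpace ℝ H] [CompleteSpace H]
    (L P : H →L[ℝ] H)
    (hL : IsSelfAdjoint L) (hLnonneg : ∀ x : H, 0 ≤ ⟪L x, x⟫)
    (hP : IsSelfAdjoint P) (hPidem : P ∘L P = P)
    (lam : ℝ)
    (g : H) (hg : P g = 0)
    (u : ℝ → H) (hu : ∀ t : ℝ, u t = NormedSpace.exp ((-t) • (L + lam • P)) g) :
    ∀ t : ℝ, 0 ≤ t → lam * ‖P (u t)‖ ^ 2 ≤ ⟪L g, g⟫ := by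
  intro t ht
  have hA : IsSelfAdjoint (L + lam • P) :=
    hL.add ((IsSelfAdjoint.all lam).smul hP)
  have hu0 : u 0 = g := by simp [hu]
  calc lam * ‖P (u t)‖ ^ 2 ≤ ⟪L (u t), u t⟫ + lam * ‖P (u t)‖ ^ 2 :=
        le_add_of_nonneg_left (hLnonneg _)
    _ = ⟪(L + lam • P) (u t), u t⟫ := by
        rw [add_apply, smul_apply, inner_add_left, real_inner_smul_left,
          real_inner_apply_self_eq_norm_sq_of_comp_self hP hPidem]
    _ ≤ ⟪(L + lam • P) (u 0), u 0⟫ := by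
        simp only [hu]
        exact antitone_inner_apply_exp_neg_smul hA g ht
    _ = ⟪L g, g⟫ := by simp [hu0, hg]

/-- **Abstract base energy estimate (L∞-in-time form).**
Let `H` be a real Hilbert space, `L` a bounded nonnegative self-adjoint operator on `H`,
`P` an orthogonal projection on `H` (self-adjoint idempotent), and `λ > 0`. For `g ∈ H`
with `P g = 0`, set `u t := exp (−t (L + λ P)) g`. Then for every `t ≥ 0`,
`λ ‖P (u t)‖² ≤ ⟨L g, g⟩`. -/
theorem base_energy_estimate_sup
    {H : Type*} [NormedAddCommGroup H] [InnerProductSpace ℝ H] [CompleteSpace H]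
    (L P : H →L[ℝ] H)
    (hL : IsSelfAdjoint L) (hLnonneg : ∀ x : H, 0 ≤ ⟪L x, x⟫)
    (hP : IsSelfAdjoint P) (hPidem : P ∘L P = P)
    (lam : ℝ) (hlam : 0 < lam)
    (g : H) (hg : P g = 0)
    (u : ℝ → H) (hu : ∀ t : ℝ, u t = NormedSpace.exp ((-t) • (L + lam • P)) g) :
    ∀ t : ℝ, 0 ≤ t → lam * ‖P (u t)‖ ^ 2 ≤ ⟪L g, g⟫ :=
  base_energy_estimate_sup_general L P hL hLnonneg hP hPidem lam g hg u hu
end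

section
/- Let u be a classical solution of ∂ₜu = Δu − λu on (0,T) × Ω₀ with λ > 0, extended continuously to t = 0, and let η : ℝ^m → ℝ be smooth with 0 ≤ η ≤ 1 and compact support contained in Ω₀. If u(0,x) η(x) = 0 for all x, then for every t ∈ (0,T): ∫_{Ω₀} u(t,x)² η(x)² dx ≤ 4 ∫₀^t e^{−2λ(t−s)} ∫_{Ω₀} u(s,x)² |∇η(x)|² dx ds. -/
open MeasureTheory

/-- The Laplacian of `f : ℝ^m → ℝ`, as the sum of the second partial derivatives
in the coordinate directions. -/
noncomputable def laplacian {m : ℕ} (f : EuclideanSpace ℝ (Fin m) → ℝ)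
    (x : EuclideanSpace ℝ (Fin m)) : ℝ :=
  ∑ i : Fin m,
    fderiv ℝ (fun y => fderiv ℝ f y (EuclideanSpace.single i 1)) x (EuclideanSpace.single i 1)

/-- `u : ℝ × ℝ^m → ℝ` is a classical solution of `∂ₜ u = Δu − λ u` on `(0,T) × Ω₀`:
it is continuous on `[0,T) × Ω₀` (i.e. extends continuously to `t = 0`), has continuous
derivatives `∂ₜu`, `∇ₓu`, `∇ₓ²u` on `(0,T) × Ω₀`, satisfies the equation pointwise there,
`u(t,·)`, `∇ₓu(t,·)` are square-integrable on `Ω₀` for each `t`, and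
`t ↦ ‖u(t)‖_{L²(Ω₀)}` is bounded. -/
structure IsClassicalSolution {m : ℕ} (Ω₀ : Set (EuclideanSpace ℝ (Fin m)))
    (lam T : ℝ) (u : ℝ → EuclideanSpace ℝ (Fin m) → ℝ) : Prop where
  cont : ContinuousOn (fun p : ℝ × EuclideanSpace ℝ (Fin m) => u p.1 p.2)
      (Set.Ico 0 T ×ˢ Ω₀)
  diff_t : ∀ t ∈ Set.Ioo 0 T, ∀ x ∈ Ω₀, DifferentiableAt ℝ (fun s => u s x) t
  diff_x : ∀ t ∈ Set.Ioo 0 T, ∀ x ∈ Ω₀, DifferentiableAt ℝ (u t) x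
  diff_xx : ∀ t ∈ Set.Ioo 0 T, ∀ x ∈ Ω₀,
      DifferentiableAt ℝ (fun y => fderiv ℝ (u t) y) x
  cont_dt : ContinuousOn (fun p : ℝ × EuclideanSpace ℝ (Fin m) =>
      deriv (fun s => u s p.2) p.1) (Set.Ioo 0 T ×ˢ Ω₀)
  cont_grad : ContinuousOn (fun p : ℝ × EuclideanSpace ℝ (Fin m) =>
      fderiv ℝ (u p.1) p.2) (Set.Ioo 0 T ×ˢ Ω₀)
  cont_hess : ContinuousOn (fun p : ℝ × EuclideanSpace ℝ (Fin m) =>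
      fderiv ℝ (fun y => fderiv ℝ (u p.1) y) p.2) (Set.Ioo 0 T ×ˢ Ω₀)
  eqn : ∀ t ∈ Set.Ioo 0 T, ∀ x ∈ Ω₀,
      deriv (fun s => u s x) t = laplacian (u t) x - lam * u t x
  sq_integrable : ∀ t : ℝ, IntegrableOn (fun x => (u t x) ^ 2) Ω₀
  grad_sq_integrable : ∀ t : ℝ, IntegrableOn (fun x => ‖gradient (u t) x‖ ^ 2) Ω₀
  l2_bounded : ∃ C : ℝ, ∀ t : ℝ, ∫ x in Ω₀, (u t x) ^ 2 ≤ C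

lemma grad_norm_sq {m : ℕ} (φ : EuclideanSpace ℝ (Fin m) → ℝ) (x : EuclideanSpace ℝ (Fin m)) :
    ‖gradient φ x‖^2 = ∑ i : Fin m, (fderiv ℝ φ x (EuclideanSpace.single i 1))^2 := by
  have h : ∀ i, gradient φ x i = fderiv ℝ φ x (EuclideanSpace.single i 1) := by
    intro i
    have := EuclideanSpace.inner_single_right (𝕜 := ℝ) i (1:ℝ) (gradient φ x)
    rw [gradient, InnerProductSpace.toDual_symm_apply] at this
    rw [gradient]; simpa using this.symm
  rw [← Real.sqrt_sq (norm_nonneg (gradient φ x)), Real.sq_sqrt (by positivity)]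
  rw [EuclideanSpace.norm_eq]
  rw [Real.sq_sqrt (by positivity)]
  exact Finset.sum_congr rfl (fun i _ => by rw [Real.norm_eq_abs, sq_abs, h i])

lemma grad_zero_of_fderiv_zero {m : ℕ} (φ : EuclideanSpace ℝ (Fin m) → ℝ)
    (x : EuclideanSpace ℝ (Fin m)) (h : fderiv ℝ φ x = 0) : gradient φ x = 0 := by
  rw [gradient, h, map_zero]


lemma glue_cont {m : ℕ} {Ω₀ : Set (EuclideanSpace ℝ (Fin m))} (hΩ₀ : IsOpen Ω₀)
    {K : Set (EuclideanSpace ℝ (Fin m))} (hKc : IsClosed K) (hKΩ : K ⊆ Ω₀)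
    {φ : EuclideanSpace ℝ (Fin m) → ℝ}
    (hc : ContinuousOn φ Ω₀) (hz : ∀ x ∉ K, φ x = 0) : Continuous φ := by
  rw [continuous_iff_continuousAt]
  intro x
  by_cases hx : x ∈ Ω₀
  · exact hc.continuousAt (hΩ₀.mem_nhds hx)
  · have hxK : x ∈ Kᶜ := fun h => hx (hKΩ h)
    have : φ =ᶠ[nhds x] (fun _ => 0) :=
      Filter.eventuallyEq_of_mem (hKc.isOpen_compl.mem_nhds hxK) (fun y hy => hz y hy)
    exact (continuousAt_const.congr this.symm)

lemma glue_integrable {m : ℕ} {Ω₀ : Set (EuclideanSpace ℝ (Fin m))} (hΩ₀ : IsOpen Ω₀)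
    {K : Set (EuclideanSpace ℝ (Fin m))} (hKc : IsCompact K) (hKΩ : K ⊆ Ω₀)
    {φ : EuclideanSpace ℝ (Fin m) → ℝ}
    (hc : ContinuousOn φ Ω₀) (hz : ∀ x ∉ K, φ x = 0) : Integrable φ :=
  (glue_cont hΩ₀ hKc.isClosed hKΩ hc hz).integrable_of_hasCompactSupport
    (HasCompactSupport.intro hKc hz)

lemma ibp_identity {m : ℕ} {Ω₀ : Set (EuclideanSpace ℝ (Fin m))} (hΩ₀ : IsOpen Ω₀)
    {η w : EuclideanSpace ℝ (Fin m) → ℝ}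
    (hη : ContDiff ℝ (⊤ : ℕ∞) η) (hKc : IsCompact (tsupport η)) (hKΩ : tsupport η ⊆ Ω₀)
    (hw_cont : ContinuousOn w Ω₀)
    (hw_diff : ∀ x ∈ Ω₀, DifferentiableAt ℝ w x)
    (hw_diff2 : ∀ x ∈ Ω₀, DifferentiableAt ℝ (fun y => fderiv ℝ w y) x)
    (hgrad_cont : ContinuousOn (fun x => fderiv ℝ w x) Ω₀)
    (hhess_cont : ContinuousOn (fun x => fderiv ℝ (fun y => fderiv ℝ w y) x) Ω₀) :
    Integrable (fun x => w x * η x ^ 2 * laplacian w x) ∧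
    ∫ x, w x * η x ^ 2 * laplacian w x =
      - (∫ x, (η x)^2 * (∑ i, (fderiv ℝ w x (EuclideanSpace.single i 1))^2))
      - 2 * ∫ x, w x * η x *
          (∑ i, fderiv ℝ η x (EuclideanSpace.single i 1) *
            fderiv ℝ w x (EuclideanSpace.single i 1)) := by
  classical
  set e : Fin m → EuclideanSpace ℝ (Fin m) := fun i => EuclideanSpace.single i 1 with he
  set K := tsupport η with hK
  have hηc : Continuous η := hη.continuous
  have hηd : Differentiable ℝ η := hη.differentiable (by simp)
  have hηz : ∀ x ∉ K, η x = 0 := fun x hx => image_eq_zero_of_notMem_tsupport hx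
  have hdηz : ∀ x ∉ K, fderiv ℝ η x = 0 := by
    intro x hx
    have hev : η =ᶠ[nhds x] (fun _ => 0) :=
      Filter.eventuallyEq_of_mem ((isClosed_tsupport η).isOpen_compl.mem_nhds hx)
        (fun y hy => hηz y hy)
    rw [hev.fderiv_eq, fderiv_const_apply]
  -- abbreviations
  set a : Fin m → EuclideanSpace ℝ (Fin m) → ℝ := fun i x => fderiv ℝ w x (e i) with ha
  set b : Fin m → EuclideanSpace ℝ (Fin m) → ℝ := fun i x => fderiv ℝ η x (e i) with hb
  set Hl : Fin m → EuclideanSpace ℝ (Fin m) → ℝ :=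
    fun i x => fderiv ℝ (fun y => fderiv ℝ w y (e i)) x (e i) with hHl
  set f : EuclideanSpace ℝ (Fin m) → ℝ := fun x => w x * η x with hf
  set g : Fin m → EuclideanSpace ℝ (Fin m) → ℝ := fun i x => η x * a i x with hg
  -- differentiability and derivative formulas
  have hcover : ∀ x : EuclideanSpace ℝ (Fin m), x ∈ Ω₀ ∨ x ∉ K := by
    intro x; by_cases h : x ∈ Ω₀ <;> [exact Or.inl h; exact Or.inr (fun hk => h (hKΩ hk))]
  have hzero_near : ∀ x ∉ K, ∀ φ : EuclideanSpace ℝ (Fin m) → ℝ,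
      (∀ y, y ∉ K → φ y = 0) → HasFDerivAt φ (0 : EuclideanSpace ℝ (Fin m) →L[ℝ] ℝ) x := by
    intro x hx φ hφ
    have hev : φ =ᶠ[nhds x] (fun _ => 0) :=
      Filter.eventuallyEq_of_mem ((isClosed_tsupport η).isOpen_compl.mem_nhds hx)
        (fun y hy => hφ y hy)
    exact (hasFDerivAt_const (0:ℝ) x).congr_of_eventuallyEq hev
  have hfd : ∀ x, HasFDerivAt f (η x • fderiv ℝ w x + w x • fderiv ℝ η x) x := by
    intro x
    rcases hcover x with hx | hx
    · have := (hw_diff x hx).hasFDerivAt.mul (hηd x).hasFDerivAt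
      exact this.congr_fderiv (by abel)
    · have h0 : HasFDerivAt f 0 x :=
        hzero_near x hx f (fun y hy => by simp [hf, hηz y hy])
      have : η x • fderiv ℝ w x + w x • fderiv ℝ η x = 0 := by
        rw [hηz x hx, hdηz x hx]; simp
      rw [this]; exact h0
  have hDa : ∀ i, ∀ x ∈ Ω₀, HasFDerivAt (fun y => a i y)
      ((ContinuousLinearMap.apply ℝ ℝ (e i)).comp (fderiv ℝ (fun y => fderiv ℝ w y) x)) x := by
    intro i x hx
    exact (ContinuousLinearMap.apply ℝ ℝ (e i)).hasFDerivAt.comp x (hw_diff2 x hx).hasFDerivAt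
  have hgd : ∀ i x, HasFDerivAt (g i)
      (η x • fderiv ℝ (fun y => a i y) x + a i x • fderiv ℝ η x) x := by
    intro i x
    rcases hcover x with hx | hx
    · have := (hηd x).hasFDerivAt.mul ((hDa i x hx).differentiableAt.hasFDerivAt)
      exact this.congr_fderiv (by abel)
    · have h0 : HasFDerivAt (g i) 0 x :=
        hzero_near x hx (g i) (fun y hy => by simp [hg, hηz y hy])
      have : η x • fderiv ℝ (fun y => a i y) x + a i x • fderiv ℝ η x = 0 := by
        rw [hηz x hx, hdηz x hx]; simp
      rw [this]; exact h0
  have hf_diff : Differentiable ℝ f := fun x => (hfd x).differentiableAt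
  have hg_diff : ∀ i, Differentiable ℝ (g i) := fun i x => (hgd i x).differentiableAt
  have hfder : ∀ i x, fderiv ℝ f x (e i) = η x * a i x + w x * b i x := by
    intro i x; rw [(hfd x).fderiv]; simp [ha, hb, smul_eq_mul]
  have hgder : ∀ i x, fderiv ℝ (g i) x (e i) = η x * Hl i x + a i x * b i x := by
    intro i x; rw [(hgd i x).fderiv]; simp [hHl, hb, smul_eq_mul]; exact Or.inl rfl
  -- continuity facts on Ω₀
  have ha_cont : ∀ i, ContinuousOn (a i) Ω₀ := fun i =>
    hgrad_cont.clm_apply continuousOn_const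
  have hb_cont : ∀ i, Continuous (b i) := fun i =>
    (hη.continuous_fderiv (by simp)).clm_apply continuous_const
  have hHl_cont : ∀ i, ContinuousOn (Hl i) Ω₀ := by
    intro i
    have heq : ∀ x ∈ Ω₀, Hl i x =
        (fderiv ℝ (fun y => fderiv ℝ w y) x (e i)) (e i) := by
      intro x hx
      have := (hDa i x hx).fderiv
      simp only [hHl]
      rw [ha] at this
      rw [this]
      rfl
    exact ((hhess_cont.clm_apply continuousOn_const).clm_apply continuousOn_const).congr heq
  -- integrability of the pieces
  have int_glue : ∀ φ : EuclideanSpace ℝ (Fin m) → ℝ, ContinuousOn φ Ω₀ →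
      (∀ x ∉ K, φ x = 0) → Integrable φ :=
    fun φ hc hz => glue_integrable hΩ₀ hKc hKΩ hc hz
  have hηcp : ContinuousOn (fun x => η x ^ 2) Ω₀ := (hηc.pow 2).continuousOn
  have hP1 : ∀ i, Integrable (fun x => w x * η x ^ 2 * Hl i x) := by
    intro i
    apply int_glue _ ((hw_cont.mul hηcp).mul (hHl_cont i))
    intro x hx; simp [hηz x hx]
  have hP2 : ∀ i, Integrable (fun x => w x * η x * (b i x * a i x)) := by
    intro i
    apply int_glue _ ((hw_cont.mul hηc.continuousOn).mul
      ((hb_cont i).continuousOn.mul (ha_cont i)))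
    intro x hx; simp [hηz x hx]
  have hP3 : ∀ i, Integrable (fun x => η x ^ 2 * a i x ^ 2) := by
    intro i
    apply int_glue _ (hηcp.mul ((ha_cont i).pow 2))
    intro x hx; simp [hηz x hx]
  -- integration by parts for each coordinate
  have ibp_i : ∀ i, ∫ x, w x * η x ^ 2 * Hl i x + w x * η x * (b i x * a i x) =
      - ∫ x, η x ^ 2 * a i x ^ 2 + w x * η x * (b i x * a i x) := by
    intro i
    have e1 : (fun x => f x * fderiv ℝ (g i) x (e i)) =
        (fun x => w x * η x ^ 2 * Hl i x + w x * η x * (b i x * a i x)) := by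
      funext x; rw [hgder i x]; simp only [hf]; ring
    have e2 : (fun x => fderiv ℝ f x (e i) * g i x) =
        (fun x => η x ^ 2 * a i x ^ 2 + w x * η x * (b i x * a i x)) := by
      funext x; rw [hfder i x]; simp only [hg]; ring
    have := integral_mul_fderiv_eq_neg_fderiv_mul_of_integrable (μ := volume)
      (f := f) (g := g i) (v := e i) ?_ ?_ ?_ (fun x _ => hf_diff x) (fun x _ => hg_diff i x)
    · rw [e1] at this; rw [e2] at this; exact this
    · rw [e2]; exact (hP3 i).add (hP2 i)
    · rw [e1]; exact (hP1 i).add (hP2 i)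
    · apply int_glue _ ((hw_cont.mul hηc.continuousOn).mul
        (hηc.continuousOn.mul (ha_cont i)))
      intro x hx; simp [hf, hg, hηz x hx]
  have key_i : ∀ i, ∫ x, w x * η x ^ 2 * Hl i x =
      - (∫ x, η x ^ 2 * a i x ^ 2) - 2 * ∫ x, w x * η x * (b i x * a i x) := by
    intro i
    have h1 := ibp_i i
    rw [integral_add (hP1 i) (hP2 i), integral_add (hP3 i) (hP2 i)] at h1
    linarith
  -- sum over i
  have sum1 : ∫ x, w x * η x ^ 2 * laplacian w x = ∑ i, ∫ x, w x * η x ^ 2 * Hl i x := by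
    rw [← integral_finset_sum _ (fun i _ => hP1 i)]
    congr 1; funext x
    rw [← Finset.mul_sum]
    rfl
  have sum2 : ∫ x, (η x)^2 * (∑ i, (fderiv ℝ w x (EuclideanSpace.single i 1))^2)
      = ∑ i, ∫ x, η x ^ 2 * a i x ^ 2 := by
    rw [← integral_finset_sum _ (fun i _ => hP3 i)]
    congr 1; funext x; rw [← Finset.mul_sum]
  have sum3 : ∫ x, w x * η x * (∑ i, fderiv ℝ η x (EuclideanSpace.single i 1) *
        fderiv ℝ w x (EuclideanSpace.single i 1))
      = ∑ i, ∫ x, w x * η x * (b i x * a i x) := by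
    rw [← integral_finset_sum _ (fun i _ => hP2 i)]
    congr 1; funext x; rw [← Finset.mul_sum]
  constructor
  · have heq : (fun x => w x * η x ^ 2 * laplacian w x)
        = fun x => ∑ i, w x * η x ^ 2 * Hl i x := by
      funext x
      show w x * η x ^ 2 * (∑ i, Hl i x) = _
      rw [Finset.mul_sum]
    rw [heq]
    exact integrable_finset_sum _ (fun i _ => hP1 i)
  rw [sum1, sum2, sum3, ← Finset.sum_neg_distrib, Finset.mul_sum, ← Finset.sum_sub_distrib]
  exact Finset.sum_congr rfl (fun i _ => key_i i)


/-- **Gronwall form of the Caccioppoli estimate.**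
If `u` is a classical solution of `∂ₜu = Δu − λu` on `(0,T) × Ω₀` with `λ > 0`
(extended continuously to `t = 0`), `η : ℝ^m → ℝ` is smooth with `0 ≤ η ≤ 1` and compact
support contained in `Ω₀`, and `u(0,·) η = 0`, then for every `t ∈ (0,T)`:
`∫_{Ω₀} u(t)² η² ≤ 4 ∫₀^t e^{−2λ(t−s)} ∫_{Ω₀} u(s)² |∇η|² dx ds`. -/
theorem caccioppoli_gronwall_estimate {m : ℕ} (hm : 1 ≤ m)
    (Ω₀ : Set (EuclideanSpace ℝ (Fin m))) (hΩ₀ : IsOpen Ω₀)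
    (lam T : ℝ) (hlam : 0 < lam) (hT : 0 < T)
    (u : ℝ → EuclideanSpace ℝ (Fin m) → ℝ) (hu : IsClassicalSolution Ω₀ lam T u)
    (η : EuclideanSpace ℝ (Fin m) → ℝ) (hη : ContDiff ℝ (⊤ : ℕ∞) η)
    (hη01 : ∀ x, 0 ≤ η x ∧ η x ≤ 1)
    (hηsupp : HasCompactSupport η) (hηΩ : tsupport η ⊆ Ω₀)
    (h0 : ∀ x, u 0 x * η x = 0) :
    ∀ t ∈ Set.Ioo 0 T,
      ∫ x in Ω₀, (u t x) ^ 2 * (η x) ^ 2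
        ≤ 4 * ∫ s in (0:ℝ)..t,
            Real.exp (-2 * lam * (t - s)) * ∫ x in Ω₀, (u s x) ^ 2 * ‖gradient η x‖ ^ 2 := by
  intro t ht
  obtain ⟨ht0, htT⟩ := ht
  set K := tsupport η with hKdef
  have hKc : IsCompact K := hηsupp
  have hηz : ∀ x ∉ K, η x = 0 := fun x hx => image_eq_zero_of_notMem_tsupport hx
  have hdηz : ∀ x ∉ K, fderiv ℝ η x = 0 := by
    intro x hx
    have hev : η =ᶠ[nhds x] (fun _ => 0) :=
      Filter.eventuallyEq_of_mem ((isClosed_tsupport η).isOpen_compl.mem_nhds hx)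
        (fun y hy => hηz y hy)
    rw [hev.fderiv_eq, fderiv_const_apply]
  have hgradz : ∀ x ∉ K, gradient η x = 0 :=
    fun x hx => grad_zero_of_fderiv_zero η x (hdηz x hx)
  have int_glue : ∀ φ : EuclideanSpace ℝ (Fin m) → ℝ, ContinuousOn φ Ω₀ →
      (∀ x ∉ K, φ x = 0) → Integrable φ :=
    fun φ hc hz => glue_integrable hΩ₀ hKc hηΩ hc hz
  have cont_glue : ∀ φ : EuclideanSpace ℝ (Fin m) → ℝ, ContinuousOn φ Ω₀ →
      (∀ x ∉ K, φ x = 0) → Continuous φ :=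
    fun φ hc hz => glue_cont hΩ₀ hKc.isClosed hηΩ hc hz
  -- slice continuity
  have hu_cont : ∀ s ∈ Set.Ico 0 T, ContinuousOn (u s) Ω₀ := by
    intro s hs
    exact hu.cont.comp (Continuous.continuousOn (by fun_prop))
      (fun x hx => Set.mk_mem_prod hs hx)
  have hut_cont : ∀ s ∈ Set.Ioo 0 T,
      ContinuousOn (fun x => deriv (fun r => u r x) s) Ω₀ := by
    intro s hs
    exact hu.cont_dt.comp (Continuous.continuousOn (by fun_prop))
      (fun x hx => Set.mk_mem_prod hs hx)
  have hgrad_cont : ∀ s ∈ Set.Ioo 0 T,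
      ContinuousOn (fun x => fderiv ℝ (u s) x) Ω₀ := by
    intro s hs
    exact hu.cont_grad.comp (Continuous.continuousOn (by fun_prop))
      (fun x hx => Set.mk_mem_prod hs hx)
  have hhess_cont : ∀ s ∈ Set.Ioo 0 T,
      ContinuousOn (fun x => fderiv ℝ (fun y => fderiv ℝ (u s) y) x) Ω₀ := by
    intro s hs
    exact hu.cont_hess.comp (Continuous.continuousOn (by fun_prop))
      (fun x hx => Set.mk_mem_prod hs hx)
  set Ee : ℝ → ℝ := fun s => ∫ x, (u s x)^2 * (η x)^2 with hEedef
  set Gg : ℝ → ℝ := fun s => ∫ x, (u s x)^2 * ‖gradient η x‖^2 with hGgdef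
  set DtE : ℝ → ℝ := fun s => ∫ x, 2 * u s x * deriv (fun r => u r x) s * η x ^ 2 with hDtEdef
  have hGg_nonneg : ∀ s, 0 ≤ Gg s := fun s => integral_nonneg (fun x => by positivity)
  -- differentiation under the integral sign
  have hEederiv : ∀ s ∈ Set.Ioo 0 T, HasDerivAt Ee (DtE s) s := by
    intro s hs
    set ε : ℝ := min s (T - s) / 2 with hεdef
    have hmin1 : ε ≤ s / 2 := by
      rw [hεdef]; have := min_le_left s (T-s); linarith
    have hmin2 : ε ≤ (T - s)/2 := by
      rw [hεdef]; have := min_le_right s (T-s); linarith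
    have hε : 0 < ε := by
      rw [hεdef]
      have h1 := hs.1
      have h2 : (0:ℝ) < T - s := sub_pos.2 hs.2
      have := lt_min h1 h2
      linarith
    have hball : Metric.ball s ε ⊆ Set.Ioo 0 T := by
      intro r hr
      rw [Metric.mem_ball, Real.dist_eq, abs_lt] at hr
      constructor <;> [linarith [hr.1, hs.1]; linarith [hr.2, hs.2]]
    have hjointd : ContinuousOn (fun p : ℝ × EuclideanSpace ℝ (Fin m) =>
        2 * u p.1 p.2 * deriv (fun r => u r p.2) p.1 * η p.2 ^ 2)
        (Set.Ioo 0 T ×ˢ Ω₀) := by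
      have hc1 := hu.cont.mono (Set.prod_mono_left Set.Ioo_subset_Ico_self)
      exact ((continuousOn_const.mul hc1).mul hu.cont_dt).mul
        (((hη.continuous.comp continuous_snd).pow 2).continuousOn)
    have hcpt : IsCompact (Set.Icc (s-ε) (s+ε) ×ˢ K) := isCompact_Icc.prod hKc
    have hsub3 : Set.Icc (s-ε) (s+ε) ×ˢ K ⊆ Set.Ioo 0 T ×ˢ Ω₀ := by
      intro p hp
      have hp1 := hp.1.1
      have hp2 := hp.1.2
      exact ⟨⟨by linarith [hs.1], by linarith [hs.2]⟩, hηΩ hp.2⟩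
    obtain ⟨C, hC⟩ := hcpt.exists_bound_of_continuousOn (hjointd.mono hsub3)
    set bound : EuclideanSpace ℝ (Fin m) → ℝ := K.indicator (fun _ => max C 0) with hbd
    have hmeas : ∀ᶠ r in nhds s, AEStronglyMeasurable
        (fun x => (u r x)^2 * (η x)^2) (volume : Measure (EuclideanSpace ℝ (Fin m))) := by
      filter_upwards [isOpen_Ioo.eventually_mem hs] with r hr
      exact (cont_glue _ (((hu_cont r (Set.Ioo_subset_Ico_self hr)).pow 2).mul
        ((hη.continuous.pow 2).continuousOn))
        (fun x hx => by simp [hηz x hx])).aestronglyMeasurable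
    have hint : Integrable (fun x => (u s x)^2 * (η x)^2) :=
      int_glue _ (((hu_cont s (Set.Ioo_subset_Ico_self hs)).pow 2).mul
        ((hη.continuous.pow 2).continuousOn)) (fun x hx => by rw [hηz x hx]; ring)
    have hmeas' : AEStronglyMeasurable
        (fun x => 2 * u s x * deriv (fun ρ => u ρ x) s * η x ^ 2)
        (volume : Measure (EuclideanSpace ℝ (Fin m))) :=
      (cont_glue _ (((continuousOn_const.mul
          (hu_cont s (Set.Ioo_subset_Ico_self hs))).mul (hut_cont s hs)).mul
        ((hη.continuous.pow 2).continuousOn))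
        (fun x hx => by simp [hηz x hx])).aestronglyMeasurable
    have hbdd : ∀ᵐ x : EuclideanSpace ℝ (Fin m), ∀ r ∈ Metric.ball s ε,
        ‖2 * u r x * deriv (fun ρ => u ρ x) r * η x ^ 2‖ ≤ bound x := by
      refine Filter.Eventually.of_forall (fun x r hr => ?_)
      by_cases hx : x ∈ K
      · rw [Metric.mem_ball, Real.dist_eq, abs_lt] at hr
        have hpmem : (r, x) ∈ Set.Icc (s-ε) (s+ε) ×ˢ K :=
          ⟨⟨by linarith [hr.1], by linarith [hr.2]⟩, hx⟩
        have hb1 := hC (r, x) hpmem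
        have hbx : bound x = max C 0 := Set.indicator_of_mem hx _
        rw [hbx]
        exact le_trans hb1 (le_max_left _ _)
      · have hbx : bound x = 0 := Set.indicator_of_notMem hx _
        rw [hbx, hηz x hx]
        simp
    have hbint : Integrable bound :=
      (integrable_indicator_iff hKc.isClosed.measurableSet).2
        (integrableOn_const hKc.measure_lt_top.ne)
    have hdiff : ∀ᵐ x : EuclideanSpace ℝ (Fin m), ∀ r ∈ Metric.ball s ε,
        HasDerivAt (fun ρ => (u ρ x)^2 * (η x)^2)
          (2 * u r x * deriv (fun ρ => u ρ x) r * η x ^ 2) r := by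
      refine Filter.Eventually.of_forall (fun x r hr => ?_)
      by_cases hx : x ∈ K
      · have hrT := hball hr
        have hd := (hu.diff_t r hrT x (hηΩ hx)).hasDerivAt
        have h2 := (hd.pow 2).mul_const ((η x)^2)
        simp only [Pi.pow_apply] at h2
        norm_num at h2
        exact h2.congr_deriv (by ring)
      · have h0 : η x = 0 := hηz x hx
        have hfun : (fun ρ : ℝ => (u ρ x)^2 * (η x)^2) = fun _ => (0:ℝ) := by
          funext ρ; rw [h0]; ring
        rw [hfun, h0]
        simpa using hasDerivAt_const r (0:ℝ)
    obtain ⟨-, hD⟩ := hasDerivAt_integral_of_dominated_loc_of_deriv_le (Metric.ball_mem_nhds s hε) hmeas hint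
      hmeas' hbdd hbint hdiff
    exact hD
  -- continuity of the parametrized integrals
  have cont_param : ∀ ψ : EuclideanSpace ℝ (Fin m) → ℝ, Continuous ψ →
      (∀ x ∉ K, ψ x = 0) →
      ContinuousOn (fun s => ∫ x, (u s x)^2 * ψ x) (Set.Ico 0 T) := by
    intro ψc hψc hψz t₀ ht₀
    set b : ℝ := (t₀ + T) / 2 with hbdef
    have htb : t₀ < b := by rw [hbdef]; linarith [ht₀.2]
    have hbT : b < T := by rw [hbdef]; linarith [ht₀.2]
    have hjoint : ContinuousOn
        (fun p : ℝ × EuclideanSpace ℝ (Fin m) => (u p.1 p.2)^2 * ψc p.2)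
        (Set.Ico 0 T ×ˢ Ω₀) :=
      (hu.cont.pow 2).mul ((hψc.comp continuous_snd).continuousOn)
    have hcpt : IsCompact (Set.Icc 0 b ×ˢ K) := isCompact_Icc.prod hKc
    have hsub2 : (Set.Icc 0 b ×ˢ K) ⊆ Set.Ico 0 T ×ˢ Ω₀ := by
      intro p hp
      exact ⟨⟨hp.1.1, lt_of_le_of_lt hp.1.2 hbT⟩, hηΩ hp.2⟩
    obtain ⟨C, hC⟩ := hcpt.exists_bound_of_continuousOn (hjoint.mono hsub2)
    set bound : EuclideanSpace ℝ (Fin m) → ℝ := K.indicator (fun _ => max C 0) with hbound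
    apply continuousWithinAt_of_dominated (bound := bound)
    · filter_upwards [self_mem_nhdsWithin] with s hs
      exact (cont_glue _ (((hu_cont s hs).pow 2).mul hψc.continuousOn)
        (fun x hx => by simp [hψz x hx])).aestronglyMeasurable
    · have h2 : ∀ᶠ s in nhdsWithin t₀ (Set.Ico 0 T), s ∈ Set.Iio b :=
        mem_nhdsWithin_of_mem_nhds (Iio_mem_nhds htb)
      filter_upwards [self_mem_nhdsWithin, h2] with s hs1 hs2
      refine Filter.Eventually.of_forall (fun x => ?_)
      by_cases hx : x ∈ K
      · have hpmem : (s, x) ∈ Set.Icc 0 b ×ˢ K := ⟨⟨hs1.1, le_of_lt hs2⟩, hx⟩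
        have hb1 := hC (s, x) hpmem
        have hbx : bound x = max C 0 := Set.indicator_of_mem hx _
        rw [hbx]
        exact le_trans hb1 (le_max_left _ _)
      · have hbx : bound x = 0 := Set.indicator_of_notMem hx _
        rw [hbx, hψz x hx]
        simp
    · exact (integrable_indicator_iff hKc.isClosed.measurableSet).2
        (integrableOn_const hKc.measure_lt_top.ne)
    · refine Filter.Eventually.of_forall (fun x => ?_)
      by_cases hx : x ∈ Ω₀
      · have hc1 : ContinuousOn (fun s => (u s x)^2 * ψc x) (Set.Ico 0 T) :=
          ((hu.cont.comp ((by fun_prop : Continuous fun s : ℝ => (s, x))).continuousOn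
            (fun s hs => Set.mk_mem_prod hs hx)).pow 2).mul continuousOn_const
        exact hc1 t₀ ht₀
      · have hxK : x ∉ K := fun h => hx (hηΩ h)
        apply (continuousWithinAt_const (b := (0:ℝ))).congr
          (fun s _ => by rw [hψz x hxK]; ring) (by rw [hψz x hxK]; ring)
  have hEe_cont : ContinuousOn Ee (Set.Ico 0 T) :=
    cont_param (fun x => (η x)^2) (hη.continuous.pow 2) (fun x hx => by show (η x)^2 = 0; rw [hηz x hx]; ring)
  have hgradc : Continuous (gradient η) := by
    have h1 : Continuous (fderiv ℝ η) := hη.continuous_fderiv (by simp)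
    exact (InnerProductSpace.toDual ℝ
      (EuclideanSpace ℝ (Fin m))).symm.continuous.comp h1
  have hGg_cont : ContinuousOn Gg (Set.Ico 0 T) := by
    refine cont_param (fun x => ‖gradient η x‖^2) ?_ (fun x hx => by show ‖gradient η x‖^2 = 0; rw [hgradz x hx]; simp)
    fun_prop
  -- the key differential inequality
  have key_ineq : ∀ s ∈ Set.Ioo 0 T, DtE s + 2*lam*Ee s ≤ 2 * Gg s := by
    intro s hs
    have hsI : s ∈ Set.Ico 0 T := Set.Ioo_subset_Ico_self hs
    obtain ⟨ILap, ibp⟩ := ibp_identity hΩ₀ hη hKc hηΩ (hu_cont s hsI)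
      (fun x hx => hu.diff_x s hs x hx) (fun x hx => hu.diff_xx s hs x hx)
      (hgrad_cont s hs) (hhess_cont s hs)
    have hEes : Ee s = ∫ x, (u s x)^2 * (η x)^2 := rfl
    have hGgs : Gg s = ∫ x, (u s x)^2 * ‖gradient η x‖^2 := rfl
    have IEe : Integrable (fun x => (u s x)^2 * (η x)^2) :=
      int_glue _ (((hu_cont s hsI).pow 2).mul ((hη.continuous.pow 2).continuousOn))
        (fun x hx => by rw [hηz x hx]; ring)
    have e1 : ∀ x, 2 * u s x * deriv (fun r => u r x) s * η x ^ 2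
        = 2 * (u s x * η x ^ 2 * laplacian (u s) x) - 2*lam*((u s x)^2 * (η x)^2) := by
      intro x
      by_cases hx : x ∈ Ω₀
      · rw [hu.eqn s hs x hx]; ring
      · rw [hηz x (fun h => hx (hηΩ h))]; ring
    have step1 : DtE s = 2 * (∫ x, u s x * η x ^ 2 * laplacian (u s) x)
        - 2*lam* (∫ x, (u s x)^2 * (η x)^2) := by
      show (∫ x, 2 * u s x * deriv (fun r => u r x) s * η x ^ 2) = _
      rw [show (fun x => 2 * u s x * deriv (fun r => u r x) s * η x ^ 2)
          = fun x => 2 * (u s x * η x ^ 2 * laplacian (u s) x)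
            - 2*lam*((u s x)^2 * (η x)^2) from funext e1,
        integral_sub (ILap.const_mul 2) (IEe.const_mul (2*lam)),
        integral_const_mul, integral_const_mul]
    -- AM-GM part
    have hacont : ∀ i : Fin m, ContinuousOn
        (fun x => fderiv ℝ (u s) x (EuclideanSpace.single i 1)) Ω₀ :=
      fun i => (hgrad_cont s hs).clm_apply continuousOn_const
    have hbcont : ∀ i : Fin m, Continuous
        (fun x => fderiv ℝ η x (EuclideanSpace.single i 1)) :=
      fun i => (hη.continuous_fderiv (by simp)).clm_apply continuous_const
    have hQc : ContinuousOn
        (fun x => ∑ i, (fderiv ℝ (u s) x (EuclideanSpace.single i 1))^2) Ω₀ :=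
      continuousOn_finset_sum _ (fun i _ => (hacont i).pow 2)
    have hPc : ContinuousOn
        (fun x => ∑ i, fderiv ℝ η x (EuclideanSpace.single i 1) *
          fderiv ℝ (u s) x (EuclideanSpace.single i 1)) Ω₀ :=
      continuousOn_finset_sum _ (fun i _ => ((hbcont i).continuousOn).mul (hacont i))
    have IQ : Integrable (fun x => (η x)^2 *
        (∑ i, (fderiv ℝ (u s) x (EuclideanSpace.single i 1))^2)) :=
      int_glue _ (((hη.continuous.pow 2).continuousOn).mul hQc)
        (fun x hx => by rw [hηz x hx]; ring)
    have IP : Integrable (fun x => u s x * η x *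
        (∑ i, fderiv ℝ η x (EuclideanSpace.single i 1) *
          fderiv ℝ (u s) x (EuclideanSpace.single i 1))) :=
      int_glue _ (((hu_cont s hsI).mul (hη.continuous.continuousOn)).mul hPc)
        (fun x hx => by rw [hηz x hx]; ring)
    have IR : Integrable (fun x => (u s x)^2 * ‖gradient η x‖^2) :=
      int_glue _ (((hu_cont s hsI).pow 2).mul ((hgradc.norm.pow 2).continuousOn))
        (fun x hx => by rw [hgradz x hx]; simp)
    have point : ∀ x, 0 ≤
        2*((η x)^2 * (∑ i, (fderiv ℝ (u s) x (EuclideanSpace.single i 1))^2))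
        + 4*(u s x * η x * (∑ i, fderiv ℝ η x (EuclideanSpace.single i 1) *
            fderiv ℝ (u s) x (EuclideanSpace.single i 1)))
        + 2*((u s x)^2 * ‖gradient η x‖^2) := by
      intro x
      rw [grad_norm_sq η x]
      have expand :
          2*((η x)^2 * (∑ i, (fderiv ℝ (u s) x (EuclideanSpace.single i 1))^2))
          + 4*(u s x * η x * (∑ i, fderiv ℝ η x (EuclideanSpace.single i 1) *
              fderiv ℝ (u s) x (EuclideanSpace.single i 1)))
          + 2*((u s x)^2 * (∑ i, (fderiv ℝ η x (EuclideanSpace.single i 1))^2))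
          = ∑ i, 2*(η x * fderiv ℝ (u s) x (EuclideanSpace.single i 1)
              + u s x * fderiv ℝ η x (EuclideanSpace.single i 1))^2 := by
        simp only [Finset.mul_sum, ← Finset.sum_add_distrib]
        exact Finset.sum_congr rfl (fun i _ => by ring)
      rw [expand]
      exact Finset.sum_nonneg (fun i _ => by positivity)
    have intpos := integral_nonneg (μ := volume) (Pi.le_def.2 point)
    have I24 : Integrable (fun x =>
        2*((η x)^2 * (∑ i, (fderiv ℝ (u s) x (EuclideanSpace.single i 1))^2))
        + 4*(u s x * η x * (∑ i, fderiv ℝ η x (EuclideanSpace.single i 1) *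
            fderiv ℝ (u s) x (EuclideanSpace.single i 1)))) volume :=
      (IQ.const_mul 2).add (IP.const_mul 4)
    rw [integral_add I24 (IR.const_mul 2),
      integral_add (IQ.const_mul 2) (IP.const_mul 4),
      integral_const_mul, integral_const_mul, integral_const_mul] at intpos
    rw [hEes, hGgs, step1, ibp]
    linarith [intpos]
  have hEe0 : Ee 0 = 0 := by
    have hz : (fun x => (u 0 x)^2 * (η x)^2) = fun _ => (0:ℝ) := by
      funext x
      rw [← mul_pow, h0 x]
      norm_num
    show (∫ x, (u 0 x)^2 * (η x)^2) = 0
    rw [hz, integral_zero]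
  -- Gronwall argument
  have gron : Real.exp (2*lam*t) * Ee t ≤
      ∫ s in (0:ℝ)..t, 2 * Real.exp (2*lam*s) * Gg s := by
    set ψ : ℝ → ℝ := fun s => 2 * Real.exp (2*lam*s) * Gg s with hψdef
    have hψcont : ContinuousOn ψ (Set.Ico 0 T) :=
      ((continuous_const.mul (Real.continuous_exp.comp (by fun_prop))).continuousOn).mul hGg_cont
    have hsub1 : Set.Icc 0 t ⊆ Set.Ico 0 T := fun r hr => ⟨hr.1, lt_of_le_of_lt hr.2 htT⟩
    set Φ : ℝ → ℝ := fun r => ∫ s in (0:ℝ)..r, ψ s with hΦdef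
    have huicc : Set.uIcc (0:ℝ) t = Set.Icc 0 t := Set.uIcc_of_le ht0.le
    have hΦcont : ContinuousOn Φ (Set.Icc 0 t) := by
      rw [← huicc]
      apply intervalIntegral.continuousOn_primitive_interval
      rw [huicc]
      exact (hψcont.mono hsub1).integrableOn_compact isCompact_Icc
    set H : ℝ → ℝ := fun r => Φ r - Real.exp (2*lam*r) * Ee r with hHdef
    have hHcont : ContinuousOn H (Set.Icc 0 t) :=
      hΦcont.sub (((Real.continuous_exp.comp (by fun_prop)).continuousOn).mul
        (hEe_cont.mono hsub1))
    have hHder : ∀ r ∈ Set.Ioo 0 t, HasDerivAt H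
        (ψ r - (Real.exp (2*lam*r) * (2*lam) * Ee r + Real.exp (2*lam*r) * DtE r)) r := by
      intro r hr
      have hrT : r ∈ Set.Ioo 0 T := ⟨hr.1, hr.2.trans htT⟩
      have hΦ' : HasDerivAt Φ (ψ r) r := by
        apply intervalIntegral.integral_hasDerivAt_right
        · apply ContinuousOn.intervalIntegrable
          apply hψcont.mono
          intro z hz
          rw [Set.uIcc_of_le hr.1.le] at hz
          exact ⟨hz.1, lt_of_le_of_lt hz.2 hrT.2⟩
        · exact (hψcont.mono Set.Ioo_subset_Ico_self).stronglyMeasurableAtFilter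
            isOpen_Ioo r hrT
        · exact (hψcont.mono Set.Ioo_subset_Ico_self).continuousAt (isOpen_Ioo.mem_nhds hrT)
      have h1 : HasDerivAt (fun x : ℝ => 2*lam*x) (2*lam) r := by
        simpa using (hasDerivAt_id r).const_mul (2*lam)
      exact hΦ'.sub (h1.exp.mul (hEederiv r hrT))
    have hmono : MonotoneOn H (Set.Icc 0 t) := by
      apply monotoneOn_of_deriv_nonneg (convex_Icc 0 t) hHcont
      · rw [interior_Icc]
        exact fun r hr => ((hHder r hr).differentiableAt).differentiableWithinAt
      · rw [interior_Icc]
        intro r hr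
        rw [(hHder r hr).deriv]
        have hk := key_ineq r ⟨hr.1, hr.2.trans htT⟩
        have he := Real.exp_pos (2*lam*r)
        have hψr : ψ r = 2 * Real.exp (2*lam*r) * Gg r := rfl
        rw [hψr]
        nlinarith [hk, he]
    have h00 : H 0 = 0 := by
      show Φ 0 - Real.exp (2*lam*0) * Ee 0 = 0
      have hΦ0 : Φ 0 = 0 := intervalIntegral.integral_same
      rw [hΦ0, hEe0]; ring
    have hmle := hmono (Set.left_mem_Icc.2 ht0.le) (Set.right_mem_Icc.2 ht0.le) ht0.le
    have hHt : H t = Φ t - Real.exp (2*lam*t) * Ee t := rfl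
    have hfin : Real.exp (2*lam*t) * Ee t ≤ Φ t := by linarith [hmle, h00, hHt.ge, hHt.le]
    exact hfin
  -- conclusion
  have conv1 : ∫ x in Ω₀, (u t x)^2 * (η x)^2 = Ee t := by
    rw [hEedef]
    exact setIntegral_eq_integral_of_forall_compl_eq_zero
      (fun x hx => by rw [hηz x (fun h => hx (hηΩ h))]; ring)
  have conv2 : ∀ s : ℝ, ∫ x in Ω₀, (u s x)^2 * ‖gradient η x‖^2 = Gg s := by
    intro s
    rw [hGgdef]
    exact setIntegral_eq_integral_of_forall_compl_eq_zero
      (fun x hx => by rw [hgradz x (fun h => hx (hηΩ h))]; simp)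
  rw [conv1]
  simp only [conv2]
  have hsplit : ∀ s : ℝ, Real.exp (-2*lam*(t-s)) * Gg s
      = Real.exp (-(2*lam*t)) * (Real.exp (2*lam*s) * Gg s) := by
    intro s
    rw [show (-2*lam*(t-s)) = (-(2*lam*t)) + 2*lam*s by ring, Real.exp_add]
    ring
  simp only [hsplit]
  rw [intervalIntegral.integral_const_mul]
  set J := ∫ s in (0:ℝ)..t, Real.exp (2*lam*s) * Gg s with hJdef
  have hΦJ : (∫ s in (0:ℝ)..t, 2 * Real.exp (2*lam*s) * Gg s) = 2 * J := by
    rw [hJdef, ← intervalIntegral.integral_const_mul]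
    congr 1; funext s; ring
  rw [hΦJ] at gron
  have hJ0 : 0 ≤ J := by
    rw [hJdef]
    refine intervalIntegral.integral_nonneg ht0.le (fun s _ => ?_)
    exact mul_nonneg (Real.exp_pos _).le (hGg_nonneg s)
  have he1 : (0:ℝ) < Real.exp (-(2*lam*t)) := Real.exp_pos _
  have hid : Real.exp (2*lam*t) * Real.exp (-(2*lam*t)) = 1 := by
    rw [← Real.exp_add]; simp
  have h5 : Real.exp (2*lam*t) * Ee t * Real.exp (-(2*lam*t))
      ≤ 2 * J * Real.exp (-(2*lam*t)) := mul_le_mul_of_nonneg_right gron he1.le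
  have h6 : Ee t ≤ 2*J*Real.exp (-(2*lam*t)) := by
    have heq : Real.exp (2*lam*t) * Ee t * Real.exp (-(2*lam*t)) = Ee t := by
      rw [mul_assoc, mul_comm (Ee t) (Real.exp (-(2*lam*t))), ← mul_assoc, hid, one_mul]
    linarith [h5]
  nlinarith [h6, mul_nonneg he1.le hJ0]
end

section
/- Let c > 0 and 0 < ν < 1/2. For every real λ ≥ max(1, (16e/c)^{1/(1−2ν)}), setting N := ⌈λ^ν⌉, one has (4N²/(cλ))^N ≤ e^{−λ^ν}. -/
/-- **Quantitative core of the finite Moser iteration.**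
Let `c > 0` and `0 < ν < 1/2`. For every real `λ ≥ max(1, (16e/c)^{1/(1−2ν)})`, setting
`N := ⌈λ^ν⌉`, one has `(4N²/(cλ))^N ≤ e^{−λ^ν}`. -/
theorem moser_iteration_core (c ν : ℝ) (hc : 0 < c) (hν0 : 0 < ν) (hν : ν < 1 / 2)
    (lam : ℝ) (hlam : max 1 ((16 * Real.exp 1 / c) ^ (1 / (1 - 2 * ν))) ≤ lam) :
    (4 * (⌈lam ^ ν⌉₊ : ℝ) ^ 2 / (c * lam)) ^ (⌈lam ^ ν⌉₊ : ℕ)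
      ≤ Real.exp (-lam ^ ν) := by
  have h1 : (1:ℝ) ≤ lam := le_trans (le_max_left _ _) hlam
  have hlam0 : (0:ℝ) < lam := by linarith
  set L := lam ^ ν with hLdef
  set N := ⌈L⌉₊ with hNdef
  have hL1 : (1:ℝ) ≤ L := Real.one_le_rpow h1 hν0.le
  have hNL : L ≤ (N:ℝ) := Nat.le_ceil L
  have hN2 : (N:ℝ) ≤ 2 * L := by
    have := Nat.ceil_lt_add_one (by linarith : (0:ℝ) ≤ L)
    linarith
  have h12 : (0:ℝ) < 1 - 2 * ν := by linarith
  have hx : (0:ℝ) < 16 * Real.exp 1 / c := by positivity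
  have hkey : 16 * Real.exp 1 / c ≤ lam ^ (1 - 2 * ν) := by
    have h2 : (16 * Real.exp 1 / c) ^ (1 / (1 - 2 * ν)) ≤ lam :=
      le_trans (le_max_right _ _) hlam
    calc 16 * Real.exp 1 / c
        = ((16 * Real.exp 1 / c) ^ (1 / (1 - 2 * ν))) ^ (1 - 2 * ν) := by
          rw [one_div, Real.rpow_inv_rpow hx.le (by linarith)]
      _ ≤ lam ^ (1 - 2 * ν) :=
          Real.rpow_le_rpow (Real.rpow_nonneg hx.le _) h2 h12.le
  have h16 : 16 * Real.exp 1 * L ^ 2 ≤ c * lam := by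
    have hkey' : 16 * Real.exp 1 ≤ c * lam ^ (1 - 2 * ν) := by
      rw [div_le_iff₀ hc] at hkey; linarith [hkey]
    have hsplit : lam = L ^ 2 * lam ^ (1 - 2 * ν) := by
      rw [hLdef, ← Real.rpow_natCast (lam ^ ν) 2, ← Real.rpow_mul hlam0.le,
        ← Real.rpow_add hlam0]
      push_cast
      rw [show ν * 2 + (1 - 2 * ν) = 1 by ring, Real.rpow_one]
    have hLsq : (0:ℝ) < L ^ 2 := by positivity
    calc 16 * Real.exp 1 * L ^ 2 ≤ (c * lam ^ (1 - 2 * ν)) * L ^ 2 :=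
          mul_le_mul_of_nonneg_right hkey' hLsq.le
      _ = c * (L ^ 2 * lam ^ (1 - 2 * ν)) := by ring
      _ = c * lam := by rw [← hsplit]
  have hbase : 4 * (N:ℝ) ^ 2 / (c * lam) ≤ (Real.exp 1)⁻¹ := by
    rw [div_le_iff₀ (by positivity)]
    have hN2sq : (N:ℝ) ^ 2 ≤ 4 * L ^ 2 := by nlinarith
    have he : (0:ℝ) < Real.exp 1 := Real.exp_pos 1
    have h16' : 16 * L ^ 2 ≤ (Real.exp 1)⁻¹ * (c * lam) := by
      have := mul_le_mul_of_nonneg_left h16 (inv_nonneg.2 he.le)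
      have hee : (Real.exp 1)⁻¹ * (16 * Real.exp 1 * L ^ 2) = 16 * L ^ 2 := by
        field_simp
      linarith [this, hee.ge]
    linarith
  have hbpos : (0:ℝ) ≤ 4 * (N:ℝ) ^ 2 / (c * lam) := by positivity
  calc (4 * (N:ℝ) ^ 2 / (c * lam)) ^ N ≤ ((Real.exp 1)⁻¹) ^ N :=
        pow_le_pow_left₀ hbpos hbase N
    _ = Real.exp (-(N:ℝ)) := by
        rw [← Real.exp_neg, ← Real.exp_nat_mul]; norm_num
    _ ≤ Real.exp (-L) := Real.exp_le_exp.2 (by linarith)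
end

section
/- Let λ, σ, M > 0, let N ≥ 1 be an integer, and let φ_0, φ_1, …, φ_N : [0,∞) → [0,∞) be continuous functions such that φ_j(t) ≤ (4/σ²) ∫₀^t e^{−2λ(t−s)} φ_{j−1}(s) ds for all t ≥ 0 and 1 ≤ j ≤ N, and φ_0(s) ≤ M for all s ≥ 0. Then for all t ≥ 0, φ_N(t) ≤ M (2/(σ²λ))^N (1 − e^{−2λt} ∑_{j=0}^{N−1} (2λt)^j / j!). -/
/-!
With `c = 2λ`, let `E_j(t) = e^{ct} - ∑_{i<j} (ct)^i / i!` be the tail of the exponential series.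
Since `E_{j+1}' = c E_j` and `E_{j+1}(0) = 0`, the kernel `e^{-c(t-s)}` maps `e^{-cs} E_j(s)` to
`e^{-ct} E_{j+1}(t) / c`. As `e^{-ct} E_0(t) = 1`, induction on `j` together with monotonicity of
the integral gives `φ_j(t) ≤ M (4 / (σ² c))^j e^{-ct} E_j(t)`.
-/

open MeasureTheory

noncomputable def expTail (c : ℝ) (j : ℕ) (t : ℝ) : ℝ :=
  Real.exp (c * t) - ∑ i ∈ Finset.range j, (c * t) ^ i / (Nat.factorial i : ℝ)

theorem expTail_succ (c : ℝ) (j : ℕ) (t : ℝ) :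
    expTail c (j + 1) t = expTail c j t - (c * t) ^ j / (Nat.factorial j : ℝ) := by
  rw [expTail, expTail, Finset.sum_range_succ, sub_add_eq_sub_sub]

theorem expTail_succ_zero (c : ℝ) (j : ℕ) : expTail c (j + 1) 0 = 0 := by
  simp [expTail, Finset.sum_range_succ']

theorem continuous_expTail (c : ℝ) (j : ℕ) : Continuous (expTail c j) := by
  unfold expTail
  fun_prop

theorem hasDerivAt_pow_div_factorial (c : ℝ) (j : ℕ) (t : ℝ) :
    HasDerivAt (fun t => (c * t) ^ (j + 1) / Nat.factorial (j + 1))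
      (c * ((c * t) ^ j / (Nat.factorial j : ℝ))) t := by
  have h := (((hasDerivAt_id' t).const_mul c).fun_pow (j + 1)).div_const
    (Nat.factorial (j + 1) : ℝ)
  refine h.congr_deriv ?_
  rw [Nat.factorial_succ, Nat.cast_mul, Nat.add_sub_cancel]
  field_simp

theorem hasDerivAt_expTail_succ (c : ℝ) (j : ℕ) (t : ℝ) :
    HasDerivAt (expTail c (j + 1)) (c * expTail c j t) t := by
  induction j generalizing t with
  | zero =>
    have h : expTail c 1 = fun s => Real.exp (c * s) - 1 := by ext s; simp [expTail]
    rw [h]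
    refine (((hasDerivAt_id' t).const_mul c).exp.sub_const 1).congr_deriv ?_
    simp [expTail, mul_comm]
  | succ j ih =>
    have h := (ih t).sub (hasDerivAt_pow_div_factorial c j t)
    rw [← mul_sub, ← expTail_succ] at h
    exact h.congr_of_eventuallyEq (Filter.Eventually.of_forall fun s => expTail_succ c (j + 1) s)

theorem integral_expTail {c : ℝ} (hc : c ≠ 0) (j : ℕ) (t : ℝ) :
    ∫ s in (0 : ℝ)..t, expTail c j s = expTail c (j + 1) t / c := by
  have h : ∫ s in (0 : ℝ)..t, c * expTail c j s = expTail c (j + 1) t - expTail c (j + 1) 0 :=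
    intervalIntegral.integral_eq_sub_of_hasDerivAt (fun s _ => hasDerivAt_expTail_succ c j s)
      ((continuous_const.mul (continuous_expTail c j)).intervalIntegrable _ _)
  rw [intervalIntegral.integral_const_mul, expTail_succ_zero, sub_zero] at h
  rw [eq_div_iff hc, ← h, mul_comm]

theorem integral_exp_mul_exp_mul_expTail {c : ℝ} (hc : c ≠ 0) (j : ℕ) (t : ℝ) :
    ∫ s in (0 : ℝ)..t, Real.exp (-c * (t - s)) * (Real.exp (-(c * s)) * expTail c j s) =
      Real.exp (-(c * t)) * expTail c (j + 1) t / c := by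
  have h : ∀ s, Real.exp (-c * (t - s)) * (Real.exp (-(c * s)) * expTail c j s) =
      Real.exp (-(c * t)) * expTail c j s := fun s => by
    rw [← mul_assoc, ← Real.exp_add]; ring_nf
  simp_rw [h, intervalIntegral.integral_const_mul, integral_expTail hc, mul_div_assoc]

theorem exp_neg_mul_mul_expTail (c : ℝ) (j : ℕ) (t : ℝ) :
    Real.exp (-(c * t)) * expTail c j t =
      1 - Real.exp (-(c * t)) * ∑ i ∈ Finset.range j, (c * t) ^ i / (Nat.factorial i : ℝ) := by
  rw [expTail, mul_sub, ← Real.exp_add, neg_add_cancel, Real.exp_zero]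

theorem le_mul_exp_neg_mul_expTail_of_le_integral {c a M : ℝ} (hc : c ≠ 0) (ha : 0 ≤ a)
    {N : ℕ} {φ : ℕ → ℝ → ℝ} (hcont : ∀ j ≤ N, ContinuousOn (φ j) (Set.Ici 0))
    (hrec : ∀ j < N, ∀ t, 0 ≤ t →
      φ (j + 1) t ≤ a * ∫ s in (0 : ℝ)..t, Real.exp (-c * (t - s)) * φ j s)
    (h0 : ∀ t, 0 ≤ t → φ 0 t ≤ M) :
    ∀ j ≤ N, ∀ t, 0 ≤ t → φ j t ≤ M * (a / c) ^ j * (Real.exp (-(c * t)) * expTail c j t) := by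
  intro j
  induction j with
  | zero =>
    intro _ t ht
    simpa [exp_neg_mul_mul_expTail] using h0 t ht
  | succ j ih =>
    intro hj t ht
    have hbound : ∫ s in (0 : ℝ)..t, Real.exp (-c * (t - s)) * φ j s ≤
        ∫ s in (0 : ℝ)..t, Real.exp (-c * (t - s)) *
          (M * (a / c) ^ j * (Real.exp (-(c * s)) * expTail c j s)) := by
      refine intervalIntegral.integral_mono_on ht ?_ ?_ fun s hs =>
        mul_le_mul_of_nonneg_left (ih (by omega) s hs.1) (Real.exp_pos _).le
      · refine ContinuousOn.intervalIntegrable ?_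
        rw [Set.uIcc_of_le ht]
        exact (Continuous.continuousOn (by fun_prop)).mul
          ((hcont j (by omega)).mono Set.Icc_subset_Ici_self)
      · exact Continuous.intervalIntegrable
          (by have := continuous_expTail c j; fun_prop) _ _
    calc φ (j + 1) t ≤ a * ∫ s in (0 : ℝ)..t, Real.exp (-c * (t - s)) * φ j s := hrec j hj t ht
      _ ≤ a * ∫ s in (0 : ℝ)..t, Real.exp (-c * (t - s)) *
            (M * (a / c) ^ j * (Real.exp (-(c * s)) * expTail c j s)) :=
        mul_le_mul_of_nonneg_left hbound ha
      _ = M * (a / c) ^ (j + 1) * (Real.exp (-(c * t)) * expTail c (j + 1) t) := by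
        simp_rw [mul_left_comm _ (M * (a / c) ^ j), intervalIntegral.integral_const_mul,
          integral_exp_mul_exp_mul_expTail hc]
        ring

theorem iterated_gronwall_general (lam σ M : ℝ) (hlam : 0 < lam)
    (N : ℕ) (φ : ℕ → ℝ → ℝ)
    (hcont : ∀ j ≤ N, ContinuousOn (φ j) (Set.Ici 0))
    (hrec : ∀ j : ℕ, 1 ≤ j → j ≤ N → ∀ t : ℝ, 0 ≤ t →
      φ j t ≤ 4 / σ ^ 2 * ∫ s in (0:ℝ)..t, Real.exp (-(2 * lam) * (t - s)) * φ (j - 1) s)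
    (h0 : ∀ s : ℝ, 0 ≤ s → φ 0 s ≤ M) :
    ∀ t : ℝ, 0 ≤ t →
      φ N t ≤ M * (2 / (σ ^ 2 * lam)) ^ N *
        (1 - Real.exp (-(2 * lam * t)) *
          ∑ j ∈ Finset.range N, (2 * lam * t) ^ j / (Nat.factorial j : ℝ)) := by
  intro t ht
  have hrate : 4 / σ ^ 2 / (2 * lam) = 2 / (σ ^ 2 * lam) := by
    rw [div_div, show (4 : ℝ) = 2 * 2 by norm_num, mul_left_comm, mul_div_mul_left _ _ two_ne_zero]
  have h := le_mul_exp_neg_mul_expTail_of_le_integral (by positivity) (by positivity) hcont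
    (fun j hj => hrec (j + 1) (by omega) hj) h0 N le_rfl t ht
  rwa [hrate, exp_neg_mul_mul_expTail] at h

/-- **Iterated Gronwall recursion.**
Let `λ, σ, M > 0`, `N ≥ 1`, and let `φ_0, …, φ_N : [0,∞) → [0,∞)` be continuous with
`φ_j(t) ≤ (4/σ²) ∫₀^t e^{−2λ(t−s)} φ_{j−1}(s) ds` for `1 ≤ j ≤ N` and `φ_0 ≤ M`.
Then `φ_N(t) ≤ M (2/(σ²λ))^N (1 − e^{−2λt} ∑_{j=0}^{N−1} (2λt)^j/j!)` for all `t ≥ 0`. -/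
theorem iterated_gronwall (lam σ M : ℝ) (hlam : 0 < lam) (hσ : 0 < σ) (hM : 0 < M)
    (N : ℕ) (hN : 1 ≤ N) (φ : ℕ → ℝ → ℝ)
    (hcont : ∀ j ≤ N, ContinuousOn (φ j) (Set.Ici 0))
    (hnonneg : ∀ j ≤ N, ∀ t : ℝ, 0 ≤ t → 0 ≤ φ j t)
    (hrec : ∀ j : ℕ, 1 ≤ j → j ≤ N → ∀ t : ℝ, 0 ≤ t →
      φ j t ≤ 4 / σ ^ 2 * ∫ s in (0:ℝ)..t, Real.exp (-(2 * lam) * (t - s)) * φ (j - 1) s)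
    (h0 : ∀ s : ℝ, 0 ≤ s → φ 0 s ≤ M) :
    ∀ t : ℝ, 0 ≤ t →
      φ N t ≤ M * (2 / (σ ^ 2 * lam)) ^ N *
        (1 - Real.exp (-(2 * lam * t)) *
          ∑ j ∈ Finset.range N, (2 * lam * t) ^ j / (Nat.factorial j : ℝ)) :=
  iterated_gronwall_general lam σ M hlam N φ hcont hrec h0
end
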